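/- Let α ∈ (0,1) and β, ρ < α + 1. Define N(u) = ∫_u^∞ e^{ρ r}(e^r − 1)^{−(α+1)} dr for u > 0 and H̃(x) = ∫_0^x N(y) dy for x > 0. Then lim_{x → 0^+} x^{α−1} H̃(x) = 1/(α(1−α)), lim_{x → 0^+} x² e^{β x}(e^x − 1)^{−(α+1)} / H̃(x) = α(1−α), and ∫_0^1 x · e^{β x}(e^x − 1)^{−(α+1)} / H̃(x) dx = +∞. (By Kyprianou–Loeffen's criterion this shows that for a Lamperti stable process of index α ∈ (0,1) with zero drift, the point 0 is regular for (0,∞).) -/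

import Mathlib

/-!
Near `0` the density `ℓ_{α,ρ}(r)` behaves like `r^{-(α+1)}`. Integrating this asymptotic relation
from `u` to `∞` gives `N(u) ~ u^{-α}/α`, and integrating once more from `0` to `x` (possible since
`α < 1`) gives `H̃(x) ~ x^{1-α}/(α(1-α))`. As also `x^{α+1} ℓ_{α,β}(x) → 1`, the ratio
`x² ℓ_{α,β}(x) / H̃(x)` tends to `α(1-α) > 0`; hence `x ℓ_{α,β}(x) / H̃(x)` is at least a multiple
of `1/x` near `0`, and its integral diverges.
-/

open MeasureTheory Set Filter Topology

theorem setIntegral_Ioc_zero_rpow {r x : ℝ} (hr : -1 < r) (hx : 0 ≤ x) :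
    ∫ y in Ioc 0 x, y ^ r = x ^ (r + 1) / (r + 1) := by
  rw [← intervalIntegral.integral_of_le hx, integral_rpow (Or.inl hr),
    Real.zero_rpow (by linarith), sub_zero]

theorem integrableOn_Ioc_zero_rpow {r x : ℝ} (hr : -1 < r) (hx : 0 ≤ x) :
    IntegrableOn (fun y => y ^ r) (Ioc 0 x) :=
  (intervalIntegrable_iff_integrableOn_Ioc_of_le hx).mp
    (intervalIntegral.intervalIntegrable_rpow' hr)

theorem setIntegral_Ioi_rpow_neg_add_one {a u : ℝ} (ha : 0 < a) (hu : 0 < u) :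
    ∫ r in Ioi u, r ^ (-(a + 1)) = u ^ (-a) / a := by
  rw [integral_Ioi_rpow_of_lt (by linarith) hu, show -(a + 1) + 1 = -a by ring, neg_div_neg_eq]

theorem abs_setIntegral_sub_mul_setIntegral_rpow_le {f : ℝ → ℝ} {s : Set ℝ} {a L ε : ℝ}
    (hs : MeasurableSet s) (hs0 : s ⊆ Ioi 0)
    (hw : IntegrableOn (fun r => r ^ (-a)) s) (hf : AEStronglyMeasurable f (volume.restrict s))
    (hfL : ∀ r ∈ s, |r ^ a * f r - L| ≤ ε) :
    |(∫ r in s, f r) - L * ∫ r in s, r ^ (-a)| ≤ ε * ∫ r in s, r ^ (-a) := by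
  have hpt : ∀ r ∈ s, ‖f r - L * r ^ (-a)‖ ≤ ε * r ^ (-a) := by
    intro r hr
    have hw0 : 0 < r ^ (-a) := Real.rpow_pos_of_pos (hs0 hr) _
    have hfactor : f r - L * r ^ (-a) = r ^ (-a) * (r ^ a * f r - L) := by
      rw [mul_sub, ← mul_assoc, ← Real.rpow_add (hs0 hr), neg_add_cancel, Real.rpow_zero,
        one_mul, mul_comm]
    rw [Real.norm_eq_abs, hfactor, abs_mul, abs_of_pos hw0, mul_comm]
    exact mul_le_mul_of_nonneg_right (hfL r hr) hw0.le
  have hpt_ae : ∀ᵐ r ∂(volume.restrict s), ‖f r - L * r ^ (-a)‖ ≤ ε * r ^ (-a) :=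
    (ae_restrict_iff' hs).mpr (ae_of_all _ hpt)
  have hdiff : IntegrableOn (fun r => f r - L * r ^ (-a)) s :=
    (hw.const_mul ε).mono' (hf.sub (hw.aestronglyMeasurable.const_mul L)) hpt_ae
  have hfi : IntegrableOn f s :=
    (hdiff.add (hw.const_mul L)).congr_fun (fun r _ => sub_add_cancel _ _) hs
  rw [← integral_const_mul, ← integral_sub hfi (hw.const_mul L), ← integral_const_mul]
  exact norm_integral_le_of_norm_le (hw.const_mul ε) hpt_ae

theorem tendsto_rpow_mul_setIntegral_Ioc_zero {g : ℝ → ℝ} {q L : ℝ} (hq : q < 1)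
    (hg : AEStronglyMeasurable g (volume.restrict (Ioi 0)))
    (hlim : Tendsto (fun y => y ^ q * g y) (𝓝[>] 0) (𝓝 L)) :
    Tendsto (fun x => x ^ (q - 1) * ∫ y in Ioc 0 x, g y) (𝓝[>] 0) (𝓝 (L / (1 - q))) := by
  have h1q : 0 < 1 - q := by linarith
  rw [Metric.tendsto_nhds]
  intro ε hε
  obtain ⟨δ, hδ, hgδ⟩ := mem_nhdsGT_iff_exists_Ioc_subset.mp
    (Metric.tendsto_nhds.mp hlim (ε * (1 - q) / 2) (by positivity))
  filter_upwards [Ioo_mem_nhdsGT hδ] with x ⟨hx0, hxδ⟩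
  have hbound := abs_setIntegral_sub_mul_setIntegral_rpow_le measurableSet_Ioc
    Ioc_subset_Ioi_self (integrableOn_Ioc_zero_rpow (by linarith) hx0.le)
    (hg.mono_set Ioc_subset_Ioi_self) fun y hy => (hgδ ⟨hy.1, hy.2.trans hxδ.le⟩).le
  rw [setIntegral_Ioc_zero_rpow (by linarith) hx0.le, neg_add_eq_sub] at hbound
  have hX : 0 < x ^ (q - 1) := Real.rpow_pos_of_pos hx0 _
  have hXinv : x ^ (q - 1) * x ^ (1 - q) = 1 := by
    rw [← Real.rpow_add hx0, sub_add_sub_cancel', sub_self, Real.rpow_zero]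
  calc dist (x ^ (q - 1) * ∫ y in Ioc 0 x, g y) (L / (1 - q))
      = x ^ (q - 1) * |(∫ y in Ioc 0 x, g y) - L * (x ^ (1 - q) / (1 - q))| := by
        rw [Real.dist_eq, ← abs_of_pos hX, ← abs_mul, abs_of_pos hX]
        congr 1
        field_simp
        linear_combination L * hXinv
    _ ≤ x ^ (q - 1) * (ε * (1 - q) / 2 * (x ^ (1 - q) / (1 - q))) := by gcongr
    _ = ε / 2 * (x ^ (q - 1) * x ^ (1 - q)) := by field_simp
    _ = ε / 2 := by rw [hXinv, mul_one]
    _ < ε := half_lt_self hε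

theorem abs_setIntegral_Ioi_sub_le {f : ℝ → ℝ} {a L ε u δ : ℝ} (ha : 0 < a) (hε : 0 ≤ ε)
    (hu : 0 < u) (huδ : u ≤ δ) (hf : IntegrableOn f (Ioi u))
    (hfL : ∀ r ∈ Ioc u δ, |r ^ (a + 1) * f r - L| ≤ ε) :
    |(∫ r in Ioi u, f r) - L * (u ^ (-a) / a)|
      ≤ ε * (u ^ (-a) / a) + |(∫ r in Ioi δ, f r) - L * (δ ^ (-a) / a)| := by
  have hw : IntegrableOn (fun r : ℝ => r ^ (-(a + 1))) (Ioi u) :=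
    integrableOn_Ioi_rpow_of_lt (by linarith) hu
  have hsplit : ∀ g : ℝ → ℝ, IntegrableOn g (Ioi u) →
      ∫ r in Ioi u, g r = (∫ r in Ioc u δ, g r) + ∫ r in Ioi δ, g r := fun g hg => by
    rw [← Ioc_union_Ioi_eq_Ioi huδ, setIntegral_union Ioc_disjoint_Ioi_same measurableSet_Ioi
      (hg.mono_set Ioc_subset_Ioi_self) (hg.mono_set (Ioi_subset_Ioi huδ))]
  have hnear := abs_setIntegral_sub_mul_setIntegral_rpow_le measurableSet_Ioc
    (fun r hr => hu.trans hr.1) (hw.mono_set Ioc_subset_Ioi_self)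
    (hf.mono_set Ioc_subset_Ioi_self).aestronglyMeasurable hfL
  have hw_mono : ∫ r in Ioc u δ, r ^ (-(a + 1)) ≤ ∫ r in Ioi u, r ^ (-(a + 1)) :=
    setIntegral_mono_set hw
      ((ae_restrict_iff' measurableSet_Ioi).mpr (ae_of_all _ fun r hr =>
        (Real.rpow_pos_of_pos (hu.trans hr) _).le))
      Ioc_subset_Ioi_self.eventuallyLE
  rw [← setIntegral_Ioi_rpow_neg_add_one ha hu,
    ← setIntegral_Ioi_rpow_neg_add_one ha (hu.trans_le huδ)]
  calc _ = |((∫ r in Ioc u δ, f r) - L * ∫ r in Ioc u δ, r ^ (-(a + 1)))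
          + ((∫ r in Ioi δ, f r) - L * ∫ r in Ioi δ, r ^ (-(a + 1)))| := by
        rw [hsplit f hf, hsplit _ hw]; ring_nf
    _ ≤ _ := (abs_add_le _ _).trans
        (add_le_add_left (hnear.trans (mul_le_mul_of_nonneg_left hw_mono hε)) _)

theorem tendsto_rpow_mul_setIntegral_Ioi {f : ℝ → ℝ} {a L : ℝ} (ha : 0 < a)
    (hf : ∀ u > 0, IntegrableOn f (Ioi u))
    (hlim : Tendsto (fun r => r ^ (a + 1) * f r) (𝓝[>] 0) (𝓝 L)) :
    Tendsto (fun u => u ^ a * ∫ r in Ioi u, f r) (𝓝[>] 0) (𝓝 (L / a)) := by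
  rw [Metric.tendsto_nhds]
  intro ε hε
  obtain ⟨δ, hδ, hfδ⟩ := mem_nhdsGT_iff_exists_Ioc_subset.mp
    (Metric.tendsto_nhds.mp hlim (ε * a / 2) (by positivity))
  set K := |(∫ r in Ioi δ, f r) - L * (δ ^ (-a) / a)|
  have hK : Tendsto (fun u : ℝ => u ^ a * K) (𝓝[>] 0) (𝓝 0) := by
    have := ((Real.continuousAt_rpow_const 0 a (Or.inr ha.le)).tendsto.mono_left
      (nhdsWithin_le_nhds (s := Ioi 0))).mul_const K
    rwa [Real.zero_rpow ha.ne', zero_mul] at this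
  filter_upwards [Ioo_mem_nhdsGT hδ, hK.eventually (eventually_lt_nhds (half_pos hε))]
    with u ⟨hu0, huδ⟩ huK
  have hbound := abs_setIntegral_Ioi_sub_le ha (by positivity) hu0 huδ.le (hf u hu0)
    fun r hr => (hfδ ⟨hu0.trans hr.1, hr.2⟩).le
  have hU : 0 < u ^ a := Real.rpow_pos_of_pos hu0 _
  have hUinv : u ^ a * u ^ (-a) = 1 := by
    rw [← Real.rpow_add hu0, add_neg_cancel, Real.rpow_zero]
  calc dist (u ^ a * ∫ r in Ioi u, f r) (L / a)
      = u ^ a * |(∫ r in Ioi u, f r) - L * (u ^ (-a) / a)| := by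
        rw [Real.dist_eq, ← abs_of_pos hU, ← abs_mul, abs_of_pos hU]
        congr 1
        field_simp
        linear_combination L * hUinv
    _ ≤ u ^ a * (ε * a / 2 * (u ^ (-a) / a) + K) := by gcongr
    _ = ε / 2 * (u ^ a * u ^ (-a)) + u ^ a * K := by field_simp
    _ < ε := by rw [hUinv]; linarith

theorem lintegral_Ioc_zero_ofReal_inv_eq_top {b : ℝ} (hb : 0 < b) :
    ∫⁻ x in Ioc 0 b, ENNReal.ofReal x⁻¹ = ⊤ := by
  by_contra h
  have hint : IntegrableOn (fun x : ℝ => x⁻¹) (Ioc 0 b) :=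
    (lintegral_ofReal_ne_top_iff_integrable measurable_inv.aestronglyMeasurable
      ((ae_restrict_iff' measurableSet_Ioc).mpr
        (ae_of_all _ fun x hx => inv_nonneg.mpr hx.1.le))).mp h
  have := intervalIntegrable_inv_iff.mp
    ((intervalIntegrable_iff_integrableOn_Ioc_of_le hb.le).mpr hint)
  simp [hb.ne] at this

theorem lintegral_Ioc_zero_ofReal_eq_top_of_tendsto_mul {φ : ℝ → ℝ} {b c : ℝ} (hb : 0 < b)
    (hc : 0 < c) (hφ : Tendsto (fun x => x * φ x) (𝓝[>] 0) (𝓝 c)) :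
    ∫⁻ x in Ioc 0 b, ENNReal.ofReal (φ x) = ⊤ := by
  obtain ⟨δ, hδ, hφδ⟩ := mem_nhdsGT_iff_exists_Ioc_subset.mp
    (hφ.eventually (eventually_gt_nhds (half_lt_self hc)))
  have hm : 0 < min δ b := lt_min hδ hb
  have hlow : ∀ x ∈ Ioc 0 (min δ b),
      ENNReal.ofReal (c / 2) * ENNReal.ofReal x⁻¹ ≤ ENNReal.ofReal (φ x) := by
    intro x hx
    have hxφ : c / 2 < x * φ x := hφδ ⟨hx.1, hx.2.trans (min_le_left _ _)⟩
    rw [← ENNReal.ofReal_mul (half_pos hc).le, ← div_eq_mul_inv]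
    refine ENNReal.ofReal_le_ofReal ?_
    rw [div_le_iff₀ hx.1, mul_comm]
    exact hxφ.le
  rw [eq_top_iff]
  calc ⊤ = ∫⁻ x in Ioc 0 (min δ b), ENNReal.ofReal (c / 2) * ENNReal.ofReal x⁻¹ := by
        rw [lintegral_const_mul _ measurable_inv.ennreal_ofReal,
          lintegral_Ioc_zero_ofReal_inv_eq_top hm, ENNReal.mul_top (by simpa using hc)]
    _ ≤ ∫⁻ x in Ioc 0 (min δ b), ENNReal.ofReal (φ x) :=
        setLIntegral_mono' measurableSet_Ioc hlow
    _ ≤ _ := lintegral_mono_set (Ioc_subset_Ioc_right (min_le_right _ _))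

theorem antitoneOn_setIntegral_Ioi {f : ℝ → ℝ} {a : ℝ} (hf : ∀ u > a, IntegrableOn f (Ioi u))
    (hf0 : ∀ r > a, 0 ≤ f r) : AntitoneOn (fun u => ∫ r in Ioi u, f r) (Ioi a) :=
  fun u hu _ _ huv => setIntegral_mono_set (hf u hu)
    ((ae_restrict_iff' measurableSet_Ioi).mpr (ae_of_all _ fun r hr => hf0 r (lt_trans hu hr)))
    (Ioi_subset_Ioi huv).eventuallyLE

theorem tendsto_exp_sub_one_div_nhdsGT :
    Tendsto (fun x : ℝ => (Real.exp x - 1) / x) (𝓝[>] 0) (𝓝 1) := by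
  have h := Real.hasDerivAt_exp 0
  rw [hasDerivAt_iff_tendsto_slope, slope_fun_def_field, Real.exp_zero] at h
  simpa using h.mono_left (nhdsWithin_mono 0 fun x (hx : x ∈ Ioi 0) => ne_of_gt hx)

/-- The Lévy density `ℓ_{α,β}`. -/
noncomputable def lampertiDensity (α β r : ℝ) : ℝ :=
  Real.exp (β * r) * (Real.exp r - 1) ^ (-(α + 1))

namespace lampertiDensity

open Real

variable {α β : ℝ}

theorem nonneg {r : ℝ} (hr : 0 ≤ r) : 0 ≤ lampertiDensity α β r :=
  mul_nonneg (exp_pos _).le (rpow_nonneg (by linarith [add_one_le_exp r]) _)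

theorem continuousOn : ContinuousOn (lampertiDensity α β) (Ioi 0) := by
  intro r (hr : 0 < r)
  have hpos : exp r - 1 ≠ 0 := by linarith [add_one_lt_exp hr.ne']
  exact ((by fun_prop : Continuous fun r => exp (β * r)).continuousAt.mul
    ((continuous_exp.continuousAt.sub continuousAt_const).rpow_const
      (Or.inl hpos))).continuousWithinAt

theorem tendsto_rpow_mul :
    Tendsto (fun x => x ^ (α + 1) * lampertiDensity α β x) (𝓝[>] 0) (𝓝 1) := by
  have hquot : Tendsto (fun x : ℝ => (x / (exp x - 1)) ^ (α + 1)) (𝓝[>] 0) (𝓝 1) := by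
    simpa [inv_div] using (tendsto_exp_sub_one_div_nhdsGT.inv₀ one_ne_zero).rpow_const
      (p := α + 1) (Or.inl (by norm_num))
  have hexp : Tendsto (fun x : ℝ => exp (β * x)) (𝓝[>] 0) (𝓝 1) := by
    simpa using ((by fun_prop : Continuous fun x => exp (β * x)).tendsto 0).mono_left
      nhdsWithin_le_nhds
  refine (mul_one (1 : ℝ) ▸ hexp.mul hquot).congr' ?_
  filter_upwards [self_mem_nhdsWithin] with x (hx : 0 < x)
  have he : 0 < exp x - 1 := by linarith [add_one_lt_exp hx.ne']
  rw [lampertiDensity, div_rpow hx.le he.le, rpow_neg he.le]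
  ring

theorem integrableOn_Ioi {ρ u : ℝ} (hρ : ρ < α + 1) (hu : 0 < u) :
    IntegrableOn (lampertiDensity α ρ) (Ioi u) := by
  have hlim : Tendsto (fun r : ℝ => (1 - exp (-r)) ^ (-(α + 1))) atTop (𝓝 1) := by
    simpa using (tendsto_const_nhds.sub tendsto_exp_neg_atTop_nhds_zero).rpow_const
      (p := -(α + 1)) (Or.inl (by simp : (1 : ℝ) - 0 ≠ 0))
  have heq : lampertiDensity α ρ =ᶠ[atTop]
      fun r => (1 - exp (-r)) ^ (-(α + 1)) * exp (-(α + 1 - ρ) * r) := by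
    filter_upwards [eventually_gt_atTop 0] with r hr
    have h1 : 0 < 1 - exp (-r) := by simp [hr]
    rw [lampertiDensity, show exp r - 1 = exp r * (1 - exp (-r)) by
        rw [mul_sub, ← exp_add]; simp,
      mul_rpow (exp_pos r).le h1.le, ← exp_mul, ← mul_assoc, ← exp_add, mul_comm]
    ring_nf
  refine integrable_of_isBigO_exp_neg (sub_pos.mpr hρ)
    (continuousOn.mono (Ici_subset_Ioi.mpr hu)) ?_
  simpa using heq.trans_isBigO ((hlim.isBigO_one ℝ).mul (Asymptotics.isBigO_refl _ _))

end lampertiDensity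

theorem lamperti_stable_regularity_of_zero_general
    (α β ρ : ℝ) (hα : α ∈ Set.Ioo (0:ℝ) 1) (hρ : ρ < α + 1)
    (N Htil : ℝ → ℝ)
    (hN : ∀ u : ℝ, N u = ∫ r in Set.Ioi u, Real.exp (ρ * r) * (Real.exp r - 1) ^ (-(α + 1)))
    (hHtil : ∀ x : ℝ, Htil x = ∫ y in Set.Ioc (0:ℝ) x, N y) :
    Filter.Tendsto (fun x : ℝ => x ^ (α - 1) * Htil x) (nhdsWithin 0 (Set.Ioi 0))
        (nhds (1 / (α * (1 - α)))) ∧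
    Filter.Tendsto
        (fun x : ℝ => x ^ 2 * Real.exp (β * x) * (Real.exp x - 1) ^ (-(α + 1)) / Htil x)
        (nhdsWithin 0 (Set.Ioi 0)) (nhds (α * (1 - α))) ∧
    ∫⁻ x in Set.Ioc (0:ℝ) 1,
        ENNReal.ofReal (x * Real.exp (β * x) * (Real.exp x - 1) ^ (-(α + 1)) / Htil x) = ⊤ := by
  obtain ⟨hα0, hα1⟩ := hα
  have hc : 0 < α * (1 - α) := mul_pos hα0 (sub_pos.mpr hα1)
  have hℓ : ∀ u > 0, IntegrableOn (lampertiDensity α ρ) (Ioi u) :=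
    fun _ hu => lampertiDensity.integrableOn_Ioi hρ hu
  obtain rfl : N = fun u => ∫ r in Ioi u, lampertiDensity α ρ r := funext hN
  have hN_meas : AEStronglyMeasurable (fun u => ∫ r in Ioi u, lampertiDensity α ρ r)
      (volume.restrict (Ioi 0)) :=
    (aemeasurable_restrict_of_antitoneOn measurableSet_Ioi (antitoneOn_setIntegral_Ioi hℓ
      fun _ hr => lampertiDensity.nonneg hr.le)).aestronglyMeasurable
  have hH : Tendsto (fun x => x ^ (α - 1) * Htil x) (𝓝[>] 0) (𝓝 (1 / (α * (1 - α)))) := by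
    simp_rw [hHtil]
    simpa only [div_div] using tendsto_rpow_mul_setIntegral_Ioc_zero hα1 hN_meas
      (tendsto_rpow_mul_setIntegral_Ioi hα0 hℓ lampertiDensity.tendsto_rpow_mul)
  have hratio : Tendsto
      (fun x => x ^ 2 * Real.exp (β * x) * (Real.exp x - 1) ^ (-(α + 1)) / Htil x)
      (𝓝[>] 0) (𝓝 (α * (1 - α))) := by
    have := (lampertiDensity.tendsto_rpow_mul (α := α) (β := β)).div hH (one_div_pos.mpr hc).ne'
    rw [one_div_one_div] at this
    refine this.congr' ?_
    filter_upwards [self_mem_nhdsWithin] with x (hx : 0 < x)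
    have hsplit : x ^ (α + 1) = x ^ (α - 1) * x ^ 2 := by
      rw [← Real.rpow_two, ← Real.rpow_add hx]; ring_nf
    rw [Pi.div_apply, hsplit, mul_assoc,
      mul_div_mul_left _ _ (Real.rpow_pos_of_pos hx _).ne', lampertiDensity, ← mul_assoc]
  exact ⟨hH, hratio, lintegral_Ioc_zero_ofReal_eq_top_of_tendsto_mul one_pos hc
    (hratio.congr fun x => by ring)⟩

theorem lamperti_stable_regularity_of_zero
    (α β ρ : ℝ) (hα : α ∈ Set.Ioo (0:ℝ) 1) (hβ : β < α + 1) (hρ : ρ < α + 1)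
    (N Htil : ℝ → ℝ)
    (hN : ∀ u : ℝ, N u = ∫ r in Set.Ioi u, Real.exp (ρ * r) * (Real.exp r - 1) ^ (-(α + 1)))
    (hHtil : ∀ x : ℝ, Htil x = ∫ y in Set.Ioc (0:ℝ) x, N y) :
    Filter.Tendsto (fun x : ℝ => x ^ (α - 1) * Htil x) (nhdsWithin 0 (Set.Ioi 0))
        (nhds (1 / (α * (1 - α)))) ∧
    Filter.Tendsto
        (fun x : ℝ => x ^ 2 * Real.exp (β * x) * (Real.exp x - 1) ^ (-(α + 1)) / Htil x)
        (nhdsWithin 0 (Set.Ioi 0)) (nhds (α * (1 - α))) ∧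
    ∫⁻ x in Set.Ioc (0:ℝ) 1,
        ENNReal.ofReal (x * Real.exp (β * x) * (Real.exp x - 1) ^ (-(α + 1)) / Htil x) = ⊤ :=
  lamperti_stable_regularity_of_zero_general α β ρ hα hρ N Htil hN hHtil
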